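/- arXiv:1602.00365 — 2 statements merged into one kernel-verified Lean document; each statement's English description precedes it below -/
import Mathlib

section
/- Let Φ_V(x) = e_{11} x e_{11}* + e_{21} x e_{21}* on M_2(ℂ). If Φ_V = λ Φ_1 + (1−λ) Φ_2 with Φ_1, Φ_2 unital completely positive maps on M_2(ℂ) and λ ∈ (0,1), then Φ_1 = Φ_2 = Φ_V. That is, Φ_V is an extreme point of the set of unital completely positive maps on M_2(ℂ). -/
open Matrix ComplexOrder

/-- The algebra of `n × n` complex matrices. -/
abbrev Mat (n : ℕ) := Matrix (Fin n) (Fin n) ℂ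

/-- The map `Ad v : x ↦ v x v*` as a linear map. -/
noncomputable def adL {n : ℕ} (v : Mat n) : Mat n →ₗ[ℂ] Mat n where
  toFun x := v * x * star v
  map_add' x y := by simp [Matrix.mul_add, Matrix.add_mul]
  map_smul' c x := by simp [Matrix.mul_smul, Matrix.smul_mul]

/-- A positive map sends positive semidefinite matrices to positive semidefinite matrices. -/
def IsPosMap (n : ℕ) (Φ : Mat n →ₗ[ℂ] Mat n) : Prop :=
  ∀ A : Mat n, A.PosSemidef → (Φ A).PosSemidef

/-- `Φ` is completely positive: `Φ ⊗ id_k` is positive for every `k`, where a block matrix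
in `M_n ⊗ M_k` is applied `Φ` blockwise. -/
def IsCompletelyPositive (n : ℕ) (Φ : Mat n →ₗ[ℂ] Mat n) : Prop :=
  ∀ k : ℕ, ∀ A : Matrix (Fin n × Fin k) (Fin n × Fin k) ℂ, A.PosSemidef →
    (Matrix.of fun p q : Fin n × Fin k =>
      (Φ (Matrix.of fun i j => A (i, p.2) (j, q.2))) p.1 q.1).PosSemidef

/-- Unital completely positive map. -/
def IsUCP (n : ℕ) (Φ : Mat n →ₗ[ℂ] Mat n) : Prop :=
  Φ 1 = 1 ∧ IsCompletelyPositive n Φ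

/-- A finite operational partition of unity: nonzero matrices with `∑ vᵢ vᵢ* = 1`. -/
def IsFOP {n m : ℕ} (v : Fin m → Mat n) : Prop :=
  (∀ i, v i ≠ 0) ∧ ∑ i, v i * star (v i) = 1

/-- The map `Φ_V(x) = e₁₁ x e₁₁* + e₂₁ x e₂₁*` on `M₂(ℂ)`. -/
noncomputable def PhiV : Mat 2 →ₗ[ℂ] Mat 2 :=
  adL (Matrix.single 0 0 1) + adL (Matrix.single 1 0 1)

/-!
`Φ_V(x) = x₁₁ • 1` kills `e₂₂`, and a convex combination of the positive matrices `Φᵢ(e₂₂)`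
vanishes only if both do. A unital completely positive `Φ` with `Φ(e₂₂) = 0` is `Φ_V`: for
`v = e₂₁` the blockwise image `[[Φ(v v*), Φ(v)], [Φ(v*), Φ(1)]]` of the positive block matrix
`[[v v*, v], [v*, 1]]` is positive with vanishing corner block, which forces
`Φ(v) = Φ(v*) = 0` (the Kadison–Schwarz argument), and `Φ(e₁₁) = Φ(1) - Φ(e₂₂) = 1`.
-/

open scoped MatrixOrder

namespace Matrix.PosSemidef

variable {𝕜 n : Type*} [RCLike 𝕜] [Fintype n] {A B : Matrix n n 𝕜}

theorem eq_zero_of_smul_add_smul_eq_zero (hA : A.PosSemidef) (hB : B.PosSemidef) {a b : 𝕜}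
    (ha : 0 < a) (hb : 0 < b) (h : a • A + b • B = 0) : A = 0 ∧ B = 0 := by
  obtain ⟨hA0, hB0⟩ :=
    (add_eq_zero_iff_of_nonneg (hA.smul ha.le).nonneg (hB.smul hb.le).nonneg).mp h
  exact ⟨(smul_eq_zero.mp hA0).resolve_left ha.ne', (smul_eq_zero.mp hB0).resolve_left hb.ne'⟩

theorem apply_eq_zero_of_apply_self_eq_zero (hA : A.PosSemidef) {i : n} (hi : A i i = 0)
    (j : n) : A j i = 0 := by
  classical
  have hq : star (Pi.single i 1) ⬝ᵥ A *ᵥ Pi.single i 1 = 0 := by simp [mulVec_single, hi]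
  simpa [mulVec_single] using congrFun ((hA.dotProduct_mulVec_zero_iff _).mp hq) j

theorem apply_eq_zero_of_apply_self_eq_zero' (hA : A.PosSemidef) {i : n} (hi : A i i = 0)
    (j : n) : A i j = 0 := by
  rw [← hA.isHermitian.apply, hA.apply_eq_zero_of_apply_self_eq_zero hi, star_zero]

end Matrix.PosSemidef

namespace IsCompletelyPositive

variable {n : ℕ} {Φ : Mat n →ₗ[ℂ] Mat n}

theorem posSemidef_blocks_map_mul_star (hΦ : IsCompletelyPositive n Φ) {k : ℕ}
    (M : Fin k → Mat n) :
    (of fun p q : Fin n × Fin k => Φ (M p.2 * star (M q.2)) p.1 q.1).PosSemidef := by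
  let C : Matrix (Fin n × Fin k) (Fin n) ℂ := of fun p j => M p.2 p.1 j
  have hblock (s t : Fin k) : (of fun i j => (C * Cᴴ) (i, s) (j, t)) = M s * star (M t) := by
    ext i j
    simp [C, mul_apply, star_eq_conjTranspose]
  simpa only [hblock] using hΦ k (C * Cᴴ) (posSemidef_self_mul_conjTranspose C)

theorem map_mul_star_posSemidef (hΦ : IsCompletelyPositive n Φ) (v : Mat n) :
    (Φ (v * star v)).PosSemidef := by
  convert (hΦ.posSemidef_blocks_map_mul_star ![v]).submatrix (fun i => (i, 0))
  ext i j
  simp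

theorem map_eq_zero_of_map_mul_star_eq_zero (hΦ : IsCompletelyPositive n Φ) {v : Mat n}
    (hv : Φ (v * star v) = 0) : Φ v = 0 ∧ Φ (star v) = 0 := by
  have hP := hΦ.posSemidef_blocks_map_mul_star ![v, 1]
  have hcorner (i : Fin n) : (of fun p q : Fin n × Fin 2 =>
      Φ (![v, 1] p.2 * star (![v, 1] q.2)) p.1 q.1) (i, 0) (i, 0) = 0 := by simp [hv]
  constructor <;> ext i j
  · simpa using hP.apply_eq_zero_of_apply_self_eq_zero' (hcorner i) (j, 1)
  · simpa using hP.apply_eq_zero_of_apply_self_eq_zero (hcorner j) (i, 1)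

end IsCompletelyPositive

theorem phiV_apply (x : Mat 2) : PhiV x = x 0 0 • 1 := by
  ext i j
  fin_cases i <;> fin_cases j <;>
    simp [PhiV, adL, mul_apply, single, one_apply, star_eq_conjTranspose]

theorem single_one_zero_mul_star :
    (single 1 0 1 : Mat 2) * star (single 1 0 1) = single 1 1 1 := by
  simp [star_eq_conjTranspose, conjTranspose_single]

theorem IsUCP.eq_phiV_of_map_single_one_one_eq_zero {Φ : Mat 2 →ₗ[ℂ] Mat 2} (hΦ : IsUCP 2 Φ)
    (h22 : Φ (single 1 1 1) = 0) : Φ = PhiV := by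
  obtain ⟨h21, h12⟩ := hΦ.2.map_eq_zero_of_map_mul_star_eq_zero
    (v := single 1 0 1) (by rwa [single_one_zero_mul_star])
  have h11 : Φ (single 0 0 1) = 1 := by
    rw [← hΦ.1, ← add_zero (Φ _), ← h22, ← map_add]
    congr 1
    ext i j; fin_cases i <;> fin_cases j <;> simp
  refine Matrix.ext_linearMap _ fun i j => LinearMap.ext_ring ?_
  simp only [star_eq_conjTranspose, conjTranspose_single, star_one] at h12
  fin_cases i <;> fin_cases j <;> simp [phiV_apply, h11, h12, h21, h22]

theorem phiV_extreme (Φ₁ Φ₂ : Mat 2 →ₗ[ℂ] Mat 2)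
    (h₁ : IsUCP 2 Φ₁) (h₂ : IsUCP 2 Φ₂) (l : ℝ) (hl : l ∈ Set.Ioo (0 : ℝ) 1)
    (h : PhiV = ((l : ℂ) • Φ₁) + (((1 - l : ℝ) : ℂ) • Φ₂)) :
    Φ₁ = PhiV ∧ Φ₂ = PhiV := by
  have hsum : (l : ℂ) • Φ₁ (single 1 1 1) + ((1 - l : ℝ) : ℂ) • Φ₂ (single 1 1 1) = 0 := by
    simpa [phiV_apply] using (LinearMap.congr_fun h (single 1 1 1)).symm
  have hpsd (Φ : Mat 2 →ₗ[ℂ] Mat 2) (hΦ : IsUCP 2 Φ) : (Φ (single 1 1 1)).PosSemidef :=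
    single_one_zero_mul_star ▸ hΦ.2.map_mul_star_posSemidef _
  obtain ⟨hz₁, hz₂⟩ := (hpsd Φ₁ h₁).eq_zero_of_smul_add_smul_eq_zero (hpsd Φ₂ h₂)
    (by exact_mod_cast hl.1) (by exact_mod_cast sub_pos.mpr hl.2) hsum
  exact ⟨h₁.eq_phiV_of_map_single_one_one_eq_zero hz₁,
    h₂.eq_phiV_of_map_single_one_one_eq_zero hz₂⟩
end

section
/- Let Φ_V(x) = e_{11} x e_{11}* + e_{21} x e_{21}* on M_2(ℂ). With a = e_{11}, b = e_{22}, u = e_{12} + e_{21}, one has a a* + b b* = 1, u is unitary, and Φ_V(x) = a x a* + b (u x u*) b* for all x. Hence Φ_V is not an operational extreme point of the set of unital completely positive maps on M_2(ℂ), although it is an extreme point in the usual sense. -/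
open Matrix ComplexOrder

/-- Operational extreme point of a set `S` of linear maps. -/
def IsOpExtreme (n : ℕ) (S : Set (Mat n →ₗ[ℂ] Mat n)) (Φ : Mat n →ₗ[ℂ] Mat n) : Prop :=
  Φ ∈ S ∧ ∀ (a b : Mat n) (Φ₁ Φ₂ : Mat n →ₗ[ℂ] Mat n),
    Φ₁ ∈ S → Φ₂ ∈ S → a ≠ 0 → b ≠ 0 → a * star a + b * star b = 1 →
    Φ = (adL a).comp Φ₁ + (adL b).comp Φ₂ →
    ∃ l : ℝ, l ∈ Set.Ioo (0 : ℝ) 1 ∧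
      a * star a = (l : ℂ) • (1 : Mat n) ∧
      b * star b = ((1 - l : ℝ) : ℂ) • (1 : Mat n) ∧
      ((l⁻¹ : ℝ) : ℂ) • (adL a).comp Φ₁ = Φ ∧
      (((1 - l)⁻¹ : ℝ) : ℂ) • (adL b).comp Φ₂ = Φ

/-! The Kraus decomposition `Φ_V = Ad e₁₁ ∘ id + Ad e₂₂ ∘ Ad u` presents `Φ_V` as an operational
combination of two unital completely positive maps. Operational extremality would force the
weight `e₂₂ e₂₂* = e₂₂` to be a nonzero multiple of the identity, which it is not. -/

@[simp]
lemma adL_apply {n : ℕ} (v x : Mat n) : adL v x = v * x * star v := rfl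

lemma adL_comp_adL {n : ℕ} (v w : Mat n) : (adL v).comp (adL w) = adL (v * w) := by
  ext1 x
  simp only [LinearMap.comp_apply, adL_apply, star_mul, Matrix.mul_assoc]

lemma isCompletelyPositive_adL {n : ℕ} (v : Mat n) : IsCompletelyPositive n (adL v) := by
  intro k A hA
  have hblock : (Matrix.of fun p q : Fin n × Fin k =>
      (adL v (Matrix.of fun i j => A (i, p.2) (j, q.2))) p.1 q.1) =
      Matrix.kronecker v 1 * A * (Matrix.kronecker v (1 : Matrix (Fin k) (Fin k) ℂ))ᴴ := by
    ext p q
    simp [Matrix.mul_apply, Fintype.sum_prod_type, Matrix.one_apply, Finset.sum_mul, mul_ite,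
      ite_mul, apply_ite (starRingEnd ℂ)]
  rw [hblock]
  exact hA.mul_mul_conjTranspose_same _

lemma isCompletelyPositive_id {n : ℕ} : IsCompletelyPositive n LinearMap.id :=
  fun _ _ hA => hA

lemma isUCP_id {n : ℕ} : IsUCP n LinearMap.id :=
  ⟨rfl, isCompletelyPositive_id⟩

lemma isUCP_adL {n : ℕ} {v : Mat n} (hv : v * star v = 1) : IsUCP n (adL v) :=
  ⟨by rw [adL_apply, Matrix.mul_one, hv], isCompletelyPositive_adL v⟩

lemma not_isOpExtreme_of_nonscalar_decomposition {n : ℕ} {S : Set (Mat n →ₗ[ℂ] Mat n)}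
    {Φ Φ₁ Φ₂ : Mat n →ₗ[ℂ] Mat n} {a b : Mat n} (h₁ : Φ₁ ∈ S) (h₂ : Φ₂ ∈ S)
    (ha : a ≠ 0) (hb : b ≠ 0) (hab : a * star a + b * star b = 1)
    (hΦ : Φ = (adL a).comp Φ₁ + (adL b).comp Φ₂)
    (hb_nonscalar : ∀ c : ℂ, c ≠ 0 → b * star b ≠ c • 1) :
    ¬ IsOpExtreme n S Φ := by
  rintro ⟨-, hext⟩
  obtain ⟨l, hl, -, hbb, -⟩ := hext a b Φ₁ Φ₂ h₁ h₂ ha hb hab hΦ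
  refine hb_nonscalar _ ?_ hbb
  exact_mod_cast (sub_pos.mpr hl.2).ne'

lemma single_one_mul_star_self {n : ℕ} (i j : Fin n) :
    Matrix.single i j (1 : ℂ) * star (Matrix.single i j 1) = Matrix.single i i 1 := by
  rw [Matrix.star_eq_conjTranspose, Matrix.conjTranspose_single, star_one,
    Matrix.single_mul_single_same, mul_one]

lemma single_one_ne_smul_one {n : ℕ} {i j : Fin n} (hij : i ≠ j) {c : ℂ} (hc : c ≠ 0) :
    Matrix.single i i (1 : ℂ) ≠ c • 1 := fun h =>
  hc (by simpa [hij] using (congr_fun (congr_fun h j) j).symm)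

lemma single_one_ne_zero {n : ℕ} (i j : Fin n) : Matrix.single i j (1 : ℂ) ≠ 0 := fun h => by
  simpa using congr_fun (congr_fun h i) j

lemma single_zero_zero_add_single_one_one :
    Matrix.single 0 0 1 + Matrix.single 1 1 1 = (1 : Mat 2) := by
  rw [← Matrix.sum_single_one, Fin.sum_univ_two]

lemma star_swap :
    star (Matrix.single 0 1 1 + Matrix.single 1 0 (1 : ℂ)) =
      (Matrix.single 0 1 1 + Matrix.single 1 0 1 : Mat 2) := by
  simp only [star_add, Matrix.star_eq_conjTranspose, Matrix.conjTranspose_single, star_one,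
    add_comm]

lemma swap_mul_swap :
    (Matrix.single 0 1 1 + Matrix.single 1 0 (1 : ℂ)) *
      (Matrix.single 0 1 1 + Matrix.single 1 0 1) = (1 : Mat 2) := by
  simpa [Matrix.add_mul, Matrix.mul_add, add_comm] using single_zero_zero_add_single_one_one

lemma single_one_one_mul_swap :
    Matrix.single 1 1 1 * (Matrix.single 0 1 1 + Matrix.single 1 0 1) =
      (Matrix.single 1 0 1 : Mat 2) := by
  simp [Matrix.mul_add]

lemma phiV_eq_adL_add_adL_comp_swap :
    PhiV = (adL (Matrix.single 0 0 1 : Mat 2)).comp LinearMap.id +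
      (adL (Matrix.single 1 1 1)).comp (adL (Matrix.single 0 1 1 + Matrix.single 1 0 1)) := by
  rw [LinearMap.comp_id, adL_comp_adL, single_one_one_mul_swap]
  rfl

theorem phiV_not_opExtreme :
    (Matrix.single 0 0 1 * star (Matrix.single 0 0 (1 : ℂ)) +
      Matrix.single 1 1 1 * star (Matrix.single 1 1 (1 : ℂ)) = (1 : Mat 2)) ∧
    ((Matrix.single 0 1 1 + Matrix.single 1 0 (1 : ℂ)) *
        star (Matrix.single 0 1 1 + Matrix.single 1 0 (1 : ℂ)) = (1 : Mat 2)) ∧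
    (star (Matrix.single 0 1 1 + Matrix.single 1 0 (1 : ℂ)) *
        (Matrix.single 0 1 1 + Matrix.single 1 0 (1 : ℂ)) = (1 : Mat 2)) ∧
    (∀ x : Mat 2,
      PhiV x =
        Matrix.single 0 0 1 * x * star (Matrix.single 0 0 (1 : ℂ)) +
        Matrix.single 1 1 1 *
          ((Matrix.single 0 1 1 + Matrix.single 1 0 (1 : ℂ)) * x *
            star (Matrix.single 0 1 1 + Matrix.single 1 0 (1 : ℂ))) *
          star (Matrix.single 1 1 (1 : ℂ))) ∧
    ¬ IsOpExtreme 2 {Φ | IsUCP 2 Φ} PhiV := by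
  have hab : Matrix.single 0 0 1 * star (Matrix.single 0 0 (1 : ℂ)) +
      Matrix.single 1 1 1 * star (Matrix.single 1 1 (1 : ℂ)) = (1 : Mat 2) := by
    rw [single_one_mul_star_self, single_one_mul_star_self, single_zero_zero_add_single_one_one]
  have hu : (Matrix.single 0 1 1 + Matrix.single 1 0 (1 : ℂ)) *
      star (Matrix.single 0 1 1 + Matrix.single 1 0 (1 : ℂ)) = (1 : Mat 2) := by
    rw [star_swap, swap_mul_swap]
  have hu' : star (Matrix.single 0 1 1 + Matrix.single 1 0 (1 : ℂ)) *
      (Matrix.single 0 1 1 + Matrix.single 1 0 (1 : ℂ)) = (1 : Mat 2) := by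
    rw [star_swap, swap_mul_swap]
  refine ⟨hab, hu, hu', fun x => LinearMap.congr_fun phiV_eq_adL_add_adL_comp_swap x, ?_⟩
  refine not_isOpExtreme_of_nonscalar_decomposition isUCP_id (isUCP_adL hu)
    (single_one_ne_zero 0 0) (single_one_ne_zero 1 1) hab phiV_eq_adL_add_adL_comp_swap
    fun c hc => ?_
  rw [single_one_mul_star_self]
  exact single_one_ne_smul_one (by decide : (1 : Fin 2) ≠ 0) hc
end
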